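/- There exists a graph G (with 6 vertices) that has a K_4-immersion but no K_4-minor; consequently, having a K_4-immersion does not imply having a K_4-minor for general graphs. Such a G is necessarily not a line graph. -/

import Mathlib

/-- A multigraph: a type of vertices, a type of edges, an endpoints map,
and no loops. Parallel edges are allowed. -/
structure MG : Type 1 where
  V : Type
  E : Type
  ends : E → Sym2 V
  noLoop : ∀ e, ¬ (ends e).IsDiag

namespace MG

/-- Two vertices are adjacent if some edge joins them. -/
def Adjv (G : MG) (x y : G.V) : Prop := ∃ e, G.ends e = s(x, y)

/-- Isomorphism of multigraphs. -/
def Iso (G H : MG) : Prop :=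
  ∃ (fv : G.V ≃ H.V) (fe : G.E ≃ H.E), ∀ e, H.ends (fe e) = Sym2.map fv (G.ends e)

/-- `H` is (isomorphic to) a subgraph of `G`. -/
def IsSubgraphOf (H G : MG) : Prop :=
  ∃ (fv : H.V ↪ G.V) (fe : H.E ↪ G.E), ∀ e, G.ends (fe e) = Sym2.map fv (H.ends e)

/-- The multigraph obtained from `G` by deleting the edges `e₁, e₂` and adding a
new edge with endpoints `u, w`. -/
def splitOff (G : MG) (e₁ e₂ : G.E) (u w : G.V) (huw : u ≠ w) : MG where
  V := G.V
  E := {e : G.E // e ≠ e₁ ∧ e ≠ e₂} ⊕ Unit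
  ends := fun x => match x with
    | Sum.inl e => G.ends e.1
    | Sum.inr _ => s(u, w)
  noLoop := by
    rintro (e | e)
    · exact G.noLoop e.1
    · simpa [Sym2.mk_isDiag_iff] using huw

/-- `G'` is obtained from `G` by splitting off one pair of adjacent edges. -/
def SplitStep (G G' : MG) : Prop :=
  ∃ (e₁ e₂ : G.E) (u v w : G.V) (huw : u ≠ w),
    e₁ ≠ e₂ ∧ G.ends e₁ = s(u, v) ∧ G.ends e₂ = s(v, w) ∧
      Iso G' (G.splitOff e₁ e₂ u w huw)

/-- `G` has an `H`-immersion: `H` can be obtained from a subgraph of `G` by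
splitting off pairs of adjacent edges and removing isolated vertices. -/
def Immersion (G H : MG) : Prop :=
  ∃ G₀ G₁ : MG, G₀.IsSubgraphOf G ∧ Relation.ReflTransGen SplitStep G₀ G₁ ∧
    ∃ (fv : H.V ↪ G₁.V) (fe : H.E ≃ G₁.E),
      (∀ e, G₁.ends (fe e) = Sym2.map fv (H.ends e)) ∧
      ∀ v : G₁.V, v ∉ Set.range fv → ∀ e, v ∉ G₁.ends e

/-- A set of vertices induces a connected subgraph. -/
def ConnIn (G : MG) (S : Set G.V) : Prop :=
  ∀ a ∈ S, ∀ b ∈ S, Relation.ReflTransGen (fun x y => x ∈ S ∧ y ∈ S ∧ G.Adjv x y) a b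

/-- `G` has an `H`-minor (branch set formulation of contracting edges in a
subgraph of `G`). -/
def Minor (G H : MG) : Prop :=
  ∃ β : H.V → Set G.V,
    (∀ u, (β u).Nonempty) ∧ (∀ u, G.ConnIn (β u)) ∧
    (Pairwise fun u v => Disjoint (β u) (β v)) ∧
    ∃ η : H.E ↪ G.E, ∀ e u v, H.ends e = s(u, v) →
      ∃ a ∈ β u, ∃ b ∈ β v, G.ends (η e) = s(a, b)

/-- `G` is a connected multigraph. -/
def Connected (G : MG) : Prop :=
  Nonempty G.V ∧ ∀ a b : G.V, Relation.ReflTransGen G.Adjv a b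

/-- The degree of `v` is at least `k`. -/
def degGE (G : MG) (v : G.V) (k : ℕ) : Prop :=
  Nonempty (Fin k ↪ {e : G.E // v ∈ G.ends e})

/-- The line graph of a multigraph: a vertex for each edge, two vertices
adjacent iff the corresponding edges share an endpoint. -/
def lineGraph (G : MG) : SimpleGraph G.E where
  Adj e f := e ≠ f ∧ ∃ v, v ∈ G.ends e ∧ v ∈ G.ends f
  symm := ⟨by rintro e f ⟨h, v, h1, h2⟩; exact ⟨Ne.symm h, v, h2, h1⟩⟩
  loopless := ⟨by rintro e ⟨h, _⟩; exact h rfl⟩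

/-- `mG`: each edge of `G` is replaced by `m` parallel copies. -/
def mul (G : MG) (m : ℕ) : MG where
  V := G.V
  E := G.E × Fin m
  ends := fun p => G.ends p.1
  noLoop := fun p => G.noLoop p.1

/-- `G` has a proper edge colouring with `n` colours. -/
def EdgeColorable (G : MG) (n : ℕ) : Prop :=
  ∃ C : G.E → Fin n, ∀ e f, e ≠ f → (∃ v, v ∈ G.ends e ∧ v ∈ G.ends f) → C e ≠ C f

/-- The chromatic index of `G`. -/
noncomputable def chromIndex (G : MG) : ℕ := sInf {n | G.EdgeColorable n}

/-- A path between edges: a nonempty sequence of distinct edges in which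
consecutive edges are adjacent (this corresponds exactly to a path in the
line graph). -/
structure EPath (G : MG) where
  edges : List G.E
  ne : edges ≠ []
  nodup : edges.Nodup
  chain : edges.Chain' fun a b => ∃ v, v ∈ G.ends a ∧ v ∈ G.ends b

/-- First edge of an edge-path. -/
def EPath.firstE {G : MG} (P : EPath G) : G.E := P.edges.head P.ne

/-- Last edge of an edge-path. -/
def EPath.lastE {G : MG} (P : EPath G) : G.E := P.edges.getLast P.ne

/-- The (unordered) pair of edges `p` occurs consecutively in `P`; that is,
the corresponding 2-edge path is a subpath of `P`. -/
def EPath.Adj2 {G : MG} (P : EPath G) (p : Sym2 G.E) : Prop :=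
  ∃ l₁ a b l₂, P.edges = l₁ ++ a :: b :: l₂ ∧ p = s(a, b)

/-- A set of paths is semi-edge-disjoint: every 2-edge path is a subpath of at
most one path of the set. -/
def SED (G : MG) (S : Set (EPath G)) : Prop :=
  ∀ P ∈ S, ∀ Q ∈ S, ∀ p, P.Adj2 p → Q.Adj2 p → P = Q

/-- `H` contains `t` distinct edges and a path between each pair of them such
that this set of paths is semi-edge-disjoint. -/
def CliqueSED (H : MG) (t : ℕ) : Prop :=
  ∃ (f : Fin t ↪ H.E) (P : (i j : Fin t) → i < j → EPath H),
    (∀ i j h, (P i j h).firstE = f i ∧ (P i j h).lastE = f j) ∧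
    H.SED {Q | ∃ i j h, Q = P i j h}

/-- A path in a multigraph, recorded by its vertex sequence (without
repetitions) and edge sequence. -/
structure VPath (G : MG) where
  verts : List G.V
  edges : List G.E
  hlen : verts.length = edges.length + 1
  nodup : verts.Nodup
  hends : ∀ (i : ℕ) (h : i < edges.length),
    G.ends (edges.get ⟨i, h⟩) =
      s(verts.get ⟨i, by omega⟩, verts.get ⟨i + 1, by omega⟩)

/-- First vertex of a path. -/
def VPath.first {G : MG} (P : VPath G) : G.V :=
  P.verts.head (by have h := P.hlen; intro hnil; rw [hnil] at h; simp at h)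

/-- Last vertex of a path. -/
def VPath.last {G : MG} (P : VPath G) : G.V :=
  P.verts.getLast (by have h := P.hlen; intro hnil; rw [hnil] at h; simp at h)

/-- A cycle in a multigraph: distinct vertices `v 0, …, v (n-1)` and distinct
edges `e 0, …, e (n-1)` with `e i` joining `v i` to `v (i+1 mod n)`. -/
structure Cycle (G : MG) where
  n : ℕ
  hn : 2 ≤ n
  v : Fin n → G.V
  e : Fin n → G.E
  vinj : Function.Injective v
  einj : Function.Injective e
  hends : ∀ i : Fin n,
    G.ends (e i) =
      s(v i, v ⟨(i.1 + 1) % n, Nat.mod_lt _ (Nat.lt_of_le_of_lt (Nat.zero_le _) i.isLt)⟩)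

/-- `G` has a topological `H`-minor: branch vertices joined by internally
disjoint paths. -/
def TopMinor (G H : MG) : Prop :=
  ∃ (fv : H.V ↪ G.V) (P : H.E → VPath G),
    (∀ e, s((P e).first, (P e).last) = Sym2.map fv (H.ends e)) ∧
    (∀ e, ∀ x ∈ (P e).verts.tail.dropLast, x ∉ Set.range fv) ∧
    (∀ e f, e ≠ f → ∀ x, x ∈ (P e).verts → x ∈ (P f).verts → x ∈ Set.range fv) ∧
    (∀ e f, e ≠ f → ∀ x ∈ (P e).edges, x ∉ (P f).edges)

/-- A set of edges spans a connected subgraph. -/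
def ConnEdges (G : MG) (S : Set G.E) : Prop :=
  ∀ e ∈ S, ∀ f ∈ S,
    Relation.ReflTransGen (fun a b => a ∈ S ∧ b ∈ S ∧ ∃ v, v ∈ G.ends a ∧ v ∈ G.ends b) e f

end MG

/-- A simple graph regarded as a multigraph. -/
def SimpleGraph.toMG {V : Type} (G : SimpleGraph V) : MG where
  V := V
  E := G.edgeSet
  ends := fun e => e.1
  noLoop := fun e => G.not_isDiag_of_mem_edgeSet e.2

/-- The complete graph `K_t` as a multigraph. -/
def completeMG (t : ℕ) : MG := (⊤ : SimpleGraph (Fin t)).toMG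

/-- The 6-vertex graph of Figure 4: vertices `u=0, v=1, w=2, x=3, y=4, z=5`
and edges `xv, vz, zy, yx, vy, xu, uv, vw, wz`. -/
def fig4 : MG where
  V := Fin 6
  E := Fin 9
  ends := ![s(3, 1), s(1, 5), s(5, 4), s(4, 3), s(1, 4), s(3, 0), s(0, 1), s(1, 2), s(2, 5)]
  noLoop := by decide

/-!
Splitting off the pairs `uv, vw`, then `xu, uw`, then `xw, wz` turns `G` into a `K₄` on
`v, x, y, z` plus the isolated vertices `u, w`. In this order no parallel edges arise, so every
intermediate graph is simple and determined by its edge set.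

Deleting `v` from `G` leaves the path `u x y z w`. At most one branch set of a `K₄`-minor contains
`v`, so the other three are pairwise disjoint, pairwise adjacent connected subgraphs of a path,
i.e. intervals, and no three disjoint intervals are pairwise adjacent.

Finally `v` together with its neighbours `u, w, y` is an induced claw, which a line graph
cannot contain: two of three edges meeting a common edge `e` share an endpoint of `e`.
-/

namespace MG

instance {G : MG} [Fintype G.E] [DecidableEq G.V] : DecidableRel G.Adjv :=
  fun _ _ => inferInstanceAs (Decidable (∃ _, _))

theorem Iso.isSubgraphOf {G H : MG} (h : G.Iso H) : G.IsSubgraphOf H :=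
  let ⟨fv, fe, hfe⟩ := h
  ⟨fv.toEmbedding, fe.toEmbedding, hfe⟩

theorem exists_edgeEquiv_of_range_eq {G H : MG} (fv : G.V ↪ H.V) (hG : Function.Injective G.ends)
    (hH : Function.Injective H.ends) (h : Set.range H.ends = Set.range (Sym2.map fv ∘ G.ends)) :
    ∃ fe : G.E ≃ H.E, ∀ e, H.ends (fe e) = Sym2.map fv (G.ends e) :=
  ⟨(Equiv.ofInjective _ ((Sym2.map.injective fv.injective).comp hG)).trans
      ((Equiv.setCongr h.symm).trans (Equiv.ofInjective _ hH).symm),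
    fun _ => Equiv.apply_ofInjective_symm hH _⟩

theorem Iso.of_range_eq {G H : MG} (fv : G.V ≃ H.V) (hG : Function.Injective G.ends)
    (hH : Function.Injective H.ends) (h : Set.range H.ends = Set.range (Sym2.map fv ∘ G.ends)) :
    G.Iso H :=
  let ⟨fe, hfe⟩ := exists_edgeEquiv_of_range_eq fv.toEmbedding hG hH h
  ⟨fv, fe, hfe⟩

end MG

namespace SimpleGraph

variable {V : Type}

theorem toMG_adjv_iff {G : SimpleGraph V} {a b : V} : G.toMG.Adjv a b ↔ G.Adj a b :=
  ⟨fun ⟨e, he⟩ => (mem_edgeSet G).1 (he ▸ e.2), fun h => ⟨⟨s(a, b), h⟩, rfl⟩⟩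

theorem toMG_iso_of_range_eq {H : MG} {G : SimpleGraph H.V} (hH : Function.Injective H.ends)
    (h : Set.range H.ends = G.edgeSet) : G.toMG.Iso H :=
  MG.Iso.of_range_eq (G := G.toMG) (Equiv.refl H.V) Subtype.val_injective hH <| by
    rw [h, Set.range_comp]
    exact (((congrArg (· '' _) Sym2.map_id).trans (Set.image_id _)).trans Subtype.range_coe).symm

def splitOff (G : SimpleGraph V) (u v w : V) : SimpleGraph V :=
  fromEdgeSet (insert s(u, w) (G.edgeSet \ {s(u, v), s(v, w)}))

instance [DecidableEq V] {G : SimpleGraph V} [DecidableRel G.Adj] {u v w : V} :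
    DecidableRel (G.splitOff u v w).Adj :=
  inferInstanceAs (DecidableRel (fromEdgeSet _).Adj)

theorem toMG_splitOff_ends_injective {G : SimpleGraph V} (e₁ e₂ : G.edgeSet) {u w : V}
    (huw : u ≠ w) (hnew : ¬ G.Adj u w) :
    Function.Injective (G.toMG.splitOff e₁ e₂ u w huw).ends := by
  intro x y
  rcases x with ⟨e, -⟩ | _ <;> rcases y with ⟨f, -⟩ | _ <;> intro h
  · exact congrArg Sum.inl (Subtype.ext (Subtype.ext h))
  · have he : e.1 = s(u, w) := h
    exact (hnew ((mem_edgeSet G).1 (he ▸ e.2))).elim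
  · have hf : f.1 = s(u, w) := h.symm
    exact (hnew ((mem_edgeSet G).1 (hf ▸ f.2))).elim
  · rfl

theorem range_toMG_splitOff_ends {G : SimpleGraph V} {u v w : V} (huv : G.Adj u v)
    (hvw : G.Adj v w) (huw : u ≠ w) :
    Set.range (G.toMG.splitOff ⟨s(u, v), huv⟩ ⟨s(v, w), hvw⟩ u w huw).ends =
      (G.splitOff u v w).edgeSet := by
  rw [splitOff, edgeSet_fromEdgeSet]
  ext p
  constructor
  · rintro ⟨⟨e, he⟩ | _, rfl⟩
    · refine ⟨Or.inr ⟨e.2, ?_⟩, G.not_isDiag_of_mem_edgeSet e.2⟩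
      rintro (h | h)
      exacts [he.1 (Subtype.ext h), he.2 (Subtype.ext h)]
    · exact ⟨Or.inl rfl, Sym2.mk_isDiag_iff.not.2 huw⟩
  · rintro ⟨rfl | ⟨hp, hp'⟩, -⟩
    · exact ⟨Sum.inr (), rfl⟩
    · exact ⟨Sum.inl ⟨⟨p, hp⟩, fun h => hp' (Or.inl (congrArg Subtype.val h)),
        fun h => hp' (Or.inr (congrArg Subtype.val h))⟩, rfl⟩

theorem splitStep_toMG_splitOff {G : SimpleGraph V} {u v w : V} (huv : G.Adj u v)
    (hvw : G.Adj v w) (huw : u ≠ w) (hnew : ¬ G.Adj u w) :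
    MG.SplitStep G.toMG (G.splitOff u v w).toMG := by
  refine ⟨⟨s(u, v), huv⟩, ⟨s(v, w), hvw⟩, u, v, w, huw, fun h => ?_, rfl, rfl,
    toMG_iso_of_range_eq (toMG_splitOff_ends_injective _ _ huw hnew)
      (range_toMG_splitOff_ends huv hvw huw)⟩
  rcases Sym2.eq_iff.1 (congrArg Subtype.val h) with ⟨rfl, rfl⟩ | ⟨rfl, -⟩ <;> exact huw rfl

end SimpleGraph

namespace MG

theorem toMG_fromEdgeSet_iso (G : MG) (hG : Function.Injective G.ends) :
    (SimpleGraph.fromEdgeSet (Set.range G.ends)).toMG.Iso G := by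
  refine SimpleGraph.toMG_iso_of_range_eq hG ?_
  have hloop : Disjoint (Set.range G.ends) Sym2.diagSet :=
    Set.disjoint_left.2 fun _ ⟨e, he⟩ hd => G.noLoop e (he ▸ hd)
  rw [SimpleGraph.edgeSet_fromEdgeSet, sdiff_eq_left.2 hloop]

theorem immersion_toMG_of_splitSteps {G G₀ : MG} {V W : Type} {H : SimpleGraph W} (f : W ↪ V)
    (h₀ : G₀.IsSubgraphOf G) (hsplit : Relation.ReflTransGen SplitStep G₀ (H.map f).toMG) :
    G.Immersion H.toMG := by
  have hrange : Set.range (H.map f).toMG.ends = Set.range (Sym2.map f ∘ H.toMG.ends) := by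
    change Set.range (Subtype.val : (H.map f).edgeSet → Sym2 V) =
      Set.range (Sym2.map f ∘ (Subtype.val : H.edgeSet → Sym2 W))
    rw [Set.range_comp, Subtype.range_coe, Subtype.range_coe, SimpleGraph.edgeSet_map]
    rfl
  obtain ⟨fe, hfe⟩ := exists_edgeEquiv_of_range_eq (G := H.toMG) (H := (H.map f).toMG) f
    Subtype.val_injective Subtype.val_injective hrange
  refine ⟨G₀, _, h₀, hsplit, f, fe, hfe, fun x hx e hxe => ?_⟩
  obtain ⟨p, hp⟩ : (H.map f).toMG.ends e ∈ Set.range (Sym2.map f ∘ H.toMG.ends) :=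
    hrange ▸ ⟨e, rfl⟩
  rw [← hp] at hxe
  obtain ⟨a, -, rfl⟩ := Sym2.mem_map.1 hxe
  exact hx ⟨a, rfl⟩

end MG

theorem Set.OrdConnected.lt_min_or_max_lt_of_disjoint {α : Type*} [LinearOrder α] {X Y : Set α}
    (hX : X.OrdConnected) (hXY : Disjoint X Y) {x x' y : α} (hx : x ∈ X) (hx' : x' ∈ X)
    (hy : y ∈ Y) : y < min x x' ∨ max x x' < y := by
  by_contra! h
  exact hXY.notMem_of_mem_right hy (hX.uIcc_subset hx hx' h)

theorem Nat.not_ordConnected_triangle (A : Fin 3 → Set ℕ) (hA : ∀ i, (A i).OrdConnected)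
    (hdisj : Pairwise fun i j => Disjoint (A i) (A j))
    (htouch : Pairwise fun i j => ∃ p ∈ A i, ∃ q ∈ A j, p + 1 = q ∨ q + 1 = p) :
    False := by
  obtain ⟨a₁, ha₁, b₁, hb₁, h₁⟩ := htouch (show (0 : Fin 3) ≠ 1 by decide)
  obtain ⟨a₂, ha₂, c₂, hc₂, h₂⟩ := htouch (show (0 : Fin 3) ≠ 2 by decide)
  obtain ⟨b₃, hb₃, c₃, hc₃, h₃⟩ := htouch (show (1 : Fin 3) ≠ 2 by decide)
  have hAB : Disjoint (A 0) (A 1) := hdisj (by decide)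
  have hAC : Disjoint (A 0) (A 2) := hdisj (by decide)
  have hBC : Disjoint (A 1) (A 2) := hdisj (by decide)
  have := (hA 0).lt_min_or_max_lt_of_disjoint hAB ha₁ ha₂ hb₁
  have := (hA 0).lt_min_or_max_lt_of_disjoint hAB ha₁ ha₂ hb₃
  have := (hA 0).lt_min_or_max_lt_of_disjoint hAC ha₁ ha₂ hc₂
  have := (hA 0).lt_min_or_max_lt_of_disjoint hAC ha₁ ha₂ hc₃
  have := (hA 1).lt_min_or_max_lt_of_disjoint hAB.symm hb₁ hb₃ ha₁
  have := (hA 1).lt_min_or_max_lt_of_disjoint hAB.symm hb₁ hb₃ ha₂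
  have := (hA 1).lt_min_or_max_lt_of_disjoint hBC hb₁ hb₃ hc₂
  have := (hA 1).lt_min_or_max_lt_of_disjoint hBC hb₁ hb₃ hc₃
  have := (hA 2).lt_min_or_max_lt_of_disjoint hAC.symm hc₂ hc₃ ha₁
  have := (hA 2).lt_min_or_max_lt_of_disjoint hAC.symm hc₂ hc₃ ha₂
  have := (hA 2).lt_min_or_max_lt_of_disjoint hBC.symm hc₂ hc₃ hb₁
  have := (hA 2).lt_min_or_max_lt_of_disjoint hBC.symm hc₂ hc₃ hb₃
  omega

namespace MG

variable {G : MG}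

theorem ConnIn.ordConnected_image {S : Set G.V} (hS : G.ConnIn S) {pos : G.V → ℕ}
    (hpos : ∀ x ∈ S, ∀ y ∈ S, G.Adjv x y → pos x + 1 = pos y ∨ pos y + 1 = pos x) :
    (pos '' S).OrdConnected := by
  refine ⟨?_⟩
  rintro _ ⟨a, ha, rfl⟩ _ ⟨b, hb, rfl⟩
  induction hS a ha b hb with
  | refl =>
    intro n hn
    obtain rfl : n = pos a := le_antisymm hn.2 hn.1
    exact ⟨a, ha, rfl⟩
  | @tail x y _ hxy ih =>
    obtain ⟨hx, hy, hadj⟩ := hxy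
    intro n hn
    rcases le_or_gt n (pos x) with h | h
    · exact ih hx ⟨hn.1, h⟩
    · obtain rfl : n = pos y := by have := hpos x hx y hy hadj; have := hn.2; omega
      exact ⟨y, hy, rfl⟩

theorem not_minor_completeMG_four_of_apex (v : G.V) {pos : G.V → ℕ}
    (hinj : Set.InjOn pos {v}ᶜ) (hpos : ∀ x y, x ≠ v → y ≠ v → G.Adjv x y →
      pos x + 1 = pos y ∨ pos y + 1 = pos x) :
    ¬ G.Minor (completeMG 4) := by
  rintro ⟨β, -, hconn, hdisj, η, hη⟩
  obtain ⟨i₀, hi₀⟩ : ∃ i₀ : Fin 4, ∀ i : Fin 4, v ∈ β i → i = i₀ := by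
    by_cases h : ∃ i, v ∈ β i
    · obtain ⟨i₀, h₀⟩ := h
      exact ⟨i₀, fun i hi => by_contra fun hne => Set.disjoint_left.1 (hdisj hne) hi h₀⟩
    · exact ⟨(0 : Fin 4), fun i hi => (h ⟨i, hi⟩).elim⟩
  have hsub (i : Fin 3) : β (i₀.succAbove i) ⊆ {v}ᶜ := fun x hx (hxv : x = v) =>
    Fin.succAbove_ne i₀ i (hi₀ _ (hxv ▸ hx))
  refine Nat.not_ordConnected_triangle (fun i => pos '' β (i₀.succAbove i))
    (fun i => (hconn _).ordConnected_image fun x hx y hy => hpos x y (hsub i hx) (hsub i hy))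
    (fun i j hij => ?_) (fun i j hij => ?_)
  all_goals
    have hne : i₀.succAbove i ≠ i₀.succAbove j := Fin.succAbove_right_injective.ne hij
  · refine Set.disjoint_left.2 fun _ ⟨a, ha, hpa⟩ ⟨b, hb, hpb⟩ => ?_
    obtain rfl := hinj (hsub i ha) (hsub j hb) (hpa.trans hpb.symm)
    exact Set.disjoint_left.1 (hdisj hne) ha hb
  · obtain ⟨a, ha, b, hb, hab⟩ := hη ⟨s(i₀.succAbove i, i₀.succAbove j), hne⟩ _ _ rfl
    exact ⟨_, ⟨a, ha, rfl⟩, _, ⟨b, hb, rfl⟩,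
      hpos a b (hsub i ha) (hsub j hb) ⟨_, hab⟩⟩

theorem adjv_iff_of_ends {G H : MG} {fv : G.V ≃ H.V} {fe : G.E ≃ H.E}
    (h : ∀ e, H.ends (fe e) = Sym2.map fv (G.ends e)) {a b : G.V} :
    G.Adjv a b ↔ H.Adjv (fv a) (fv b) := by
  refine ⟨fun ⟨e, he⟩ => ⟨fe e, by rw [h, he, Sym2.map_mk]⟩,
    fun ⟨e, he⟩ => ⟨fe.symm e, ?_⟩⟩
  apply Sym2.map.injective fv.injective
  rw [← h, fe.apply_symm_apply, he, Sym2.map_mk]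

theorem lineGraph_clawFree (H : MG) {e a b c : H.E} (ha : H.lineGraph.Adj e a)
    (hb : H.lineGraph.Adj e b) (hc : H.lineGraph.Adj e c) (hab : a ≠ b) (hac : a ≠ c)
    (hbc : b ≠ c) : H.lineGraph.Adj a b ∨ H.lineGraph.Adj a c ∨ H.lineGraph.Adj b c := by
  obtain ⟨-, x, hxe, hxa⟩ := ha
  obtain ⟨-, y, hye, hyb⟩ := hb
  obtain ⟨-, z, hze, hzc⟩ := hc
  induction hends : H.ends e using Sym2.ind with | _ p q => ?_
  rw [hends, Sym2.mem_iff] at hxe hye hze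
  rcases hxe with rfl | rfl <;> rcases hye with rfl | rfl <;> rcases hze with rfl | rfl
  all_goals first
    | exact Or.inl ⟨hab, _, hxa, hyb⟩
    | exact Or.inr (Or.inl ⟨hac, _, hxa, hzc⟩)
    | exact Or.inr (Or.inr ⟨hbc, _, hyb, hzc⟩)

end MG

instance : Fintype fig4.V := Fin.fintype 6
instance : DecidableEq fig4.V := fun a b => decEq (α := Fin 6) a b
instance (n : ℕ) : OfNat fig4.V n := inferInstanceAs (OfNat (Fin 6) n)
instance : Fintype fig4.E := Fin.fintype 9

def fig4Simple : SimpleGraph fig4.V := SimpleGraph.fromEdgeSet (Set.range fig4.ends)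

instance : DecidableRel fig4Simple.Adj :=
  inferInstanceAs (DecidableRel (SimpleGraph.fromEdgeSet (Set.range fig4.ends)).Adj)

abbrev fig4Split : SimpleGraph fig4.V := ((fig4Simple.splitOff 0 1 2).splitOff 3 0 2).splitOff 3 2 5

def fig4K4 : Fin 4 ↪ fig4.V := ⟨![1, 3, 4, 5], by decide⟩

open SimpleGraph in
theorem fig4_splitSteps :
    Relation.ReflTransGen MG.SplitStep fig4Simple.toMG fig4Split.toMG :=
  .tail (.tail (.single (splitStep_toMG_splitOff (by decide) (by decide) (by decide) (by decide)))
    (splitStep_toMG_splitOff (by decide) (by decide) (by decide) (by decide)))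
    (splitStep_toMG_splitOff (by decide) (by decide) (by decide) (by decide))

theorem fig4Split_eq_map : fig4Split = (⊤ : SimpleGraph (Fin 4)).map fig4K4 := by
  ext a b
  rw [SimpleGraph.map_adj']
  revert a b
  decide

theorem fig4_immersion : fig4.Immersion (completeMG 4) :=
  MG.immersion_toMG_of_splitSteps fig4K4 (fig4.toMG_fromEdgeSet_iso (by decide)).isSubgraphOf
    (fig4Split_eq_map ▸ fig4_splitSteps)

/-- Positions along the path `u x y z w` left after deleting `v` (the value at `v` is
irrelevant). -/
def fig4PathPos : fig4.V → ℕ := ![0, 5, 4, 1, 2, 3]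

theorem fig4_not_minor : ¬ fig4.Minor (completeMG 4) :=
  MG.not_minor_completeMG_four_of_apex 1 (pos := fig4PathPos)
    (Function.Injective.injOn (by decide)) (by decide)

theorem fig4_not_iso_lineGraph : ¬ ∃ H : MG, MG.Iso fig4 (SimpleGraph.toMG H.lineGraph) := by
  rintro ⟨H, fv, fe, hfe⟩
  have hadj (a b : fig4.V) : fig4.Adjv a b ↔ H.lineGraph.Adj (fv a) (fv b) :=
    (MG.adjv_iff_of_ends hfe).trans SimpleGraph.toMG_adjv_iff
  have hne (a b : fig4.V) (h : a ≠ b) : fv a ≠ fv b := fv.injective.ne h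
  rcases H.lineGraph_clawFree ((hadj 1 0).1 (by decide)) ((hadj 1 2).1 (by decide))
      ((hadj 1 4).1 (by decide)) (hne 0 2 (by decide)) (hne 0 4 (by decide))
      (hne 2 4 (by decide)) with h | h | h
  exacts [absurd ((hadj 0 2).2 h) (by decide), absurd ((hadj 0 4).2 h) (by decide),
    absurd ((hadj 2 4).2 h) (by decide)]

/-- there is a graph on 6 vertices with a `K₄`-immersion but no
`K₄`-minor; hence `K₄`-immersion does not imply `K₄`-minor in general. Such a
graph is necessarily not a line graph. -/
theorem K4_immersion_not_minor_example :
    fig4.Immersion (completeMG 4) ∧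
    ¬ fig4.Minor (completeMG 4) ∧
    (¬ ∀ G : MG, G.Immersion (completeMG 4) → G.Minor (completeMG 4)) ∧
    (¬ ∃ H : MG, MG.Iso fig4 (SimpleGraph.toMG H.lineGraph)) :=
  ⟨fig4_immersion, fig4_not_minor, fun h => fig4_not_minor (h fig4 fig4_immersion),
    fig4_not_iso_lineGraph⟩
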